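/- Let S and R be strings (lists over an alphabet Σ), let t ∈ {1,…,|S|} and k ≥ 0. If there exists i ≤ t such that the edit (Levenshtein) distance between the substring S[i..t] and R is at most k, then the edit distance between the length-|R| suffix ending at position t, namely S[t−|R|+1..t], and R is at most 2k. (If t < |R| use the prefix S[1..t].) -/

import Mathlib

variable {α : Type*}

/-- Port note: `levenshtein` was removed from Mathlib; its former definition
(Mathlib.Data.List.EditDistance.Defs) is reproduced here. -/
structure Levenshtein.Cost (α β δ : Type*) where
  /-- Cost to delete an element from a list. -/
  delete : α → δ
  /-- Cost to insert an element into a list. -/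
  insert : β → δ
  /-- Cost to substitute one element for another in a list. -/
  substitute : α → β → δ

/-- The default cost structure, for which all operations cost `1`. -/
def Levenshtein.defaultCost [DecidableEq α] : Levenshtein.Cost α α ℕ where
  delete _ := 1
  insert _ := 1
  substitute a b := if a = b then 0 else 1

/-- (Implementation detail) one step of the Levenshtein dynamic program. -/
def Levenshtein.impl {β δ : Type*} [AddZeroClass δ] [Min δ]
    (C : Levenshtein.Cost α β δ) (xs : List α) (y : β)
    (d : {r : List δ // 0 < r.length}) : {r : List δ // 0 < r.length} :=
  let ⟨ds, w⟩ := d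
  xs.zip (ds.zip ds.tail) |>.foldr
    (init := ⟨[C.insert y + ds.getLast (List.length_pos_iff.mp w)], by simp⟩)
    (fun ⟨x, d₀, d₁⟩ ⟨r, w⟩ =>
      ⟨min (C.delete x + r[0]) (min (C.insert y + d₀) (C.substitute x y + d₁)) :: r, by simp⟩)

/-- `suffixLevenshtein C xs ys` computes the Levenshtein distance from each suffix
of `xs` to `ys`. -/
def suffixLevenshtein {β δ : Type*} [AddZeroClass δ] [Min δ]
    (C : Levenshtein.Cost α β δ) (xs : List α) (ys : List β) :
    {r : List δ // 0 < r.length} :=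
  ys.foldr
    (Levenshtein.impl C xs)
    (xs.foldr (init := ⟨[0], by simp⟩) (fun a ⟨r, w⟩ => ⟨(C.delete a + r[0]) :: r, by simp⟩))

/-- `levenshtein C xs ys` computes the Levenshtein distance from `xs` to `ys`. -/
def levenshtein {β δ : Type*} [AddZeroClass δ] [Min δ]
    (C : Levenshtein.Cost α β δ) (xs : List α) (ys : List β) : δ :=
  let ⟨r, w⟩ := suffixLevenshtein C xs ys
  r[0]

/-- Levenshtein edit distance with unit costs. -/
def edit [DecidableEq α] (u v : List α) : ℕ :=
  levenshtein Levenshtein.defaultCost u v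

/-!
Both `S[i..t]` and the window `S[t-|R|+1..t]` are suffixes of `S[1..t]`, and adding or removing
a prefix of length `a` changes the edit distance to `R` by at most `a`. The two suffixes differ in
length by at most `||S[i..t]| - |R||`, which is itself at most `edit S[i..t] R ≤ k`.
-/

theorem List.getElem_zero_cons_tail {l : List α} (h : 0 < l.length) : l[0] :: l.tail = l := by
  cases l with
  | nil => simp at h
  | cons => rfl

namespace Levenshtein

variable {β δ : Type*} [AddZeroClass δ] [Min δ] (C : Cost α β δ)

theorem impl_length (xs : List α) (y : β) (d : {r : List δ // 0 < r.length})
    (hd : d.1.length = xs.length + 1) : (impl C xs y d).1.length = xs.length + 1 := by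
  induction xs generalizing d with
  | nil => rfl
  | cons _ xs ih =>
    match d, hd with
    | ⟨_ :: d' :: ds, _⟩, hd =>
      exact congrArg (· + 1) (ih ⟨d' :: ds, by simp⟩ (by simpa using hd))

theorem impl_cons (x : α) (xs : List α) (y : β) (d : δ) (s : {r : List δ // 0 < r.length}) :
    (impl C (x :: xs) y ⟨d :: s.1, by simp⟩).1 =
      min (C.delete x + (impl C xs y s).1[0]'(impl C xs y s).2)
        (min (C.insert y + d) (C.substitute x y + s.1[0]'s.2)) :: (impl C xs y s).1 := by
  match s with
  | ⟨_ :: _, _⟩ => rfl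

theorem impl_nil (y : β) (s : {r : List δ // 0 < r.length}) (hs : s.1.length = 1) :
    (impl C [] y s).1[0]'(impl C [] y s).2 = C.insert y + s.1[0]'s.2 :=
  match s, hs with
  | ⟨[_], _⟩, _ => rfl

end Levenshtein

section LevenshteinRecursion

open Levenshtein

variable {β δ : Type*} [AddZeroClass δ] [Min δ] (C : Cost α β δ)

theorem suffixLevenshtein_length (xs : List α) (ys : List β) :
    (suffixLevenshtein C xs ys).1.length = xs.length + 1 := by
  induction ys with
  | nil => induction xs <;> simp_all [suffixLevenshtein]
  | cons y ys ih => exact impl_length C xs y _ ih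

theorem suffixLevenshtein_cons_left (x : α) (xs : List α) (ys : List β) :
    suffixLevenshtein C (x :: xs) ys =
      ⟨levenshtein C (x :: xs) ys :: (suffixLevenshtein C xs ys).1, by simp⟩ := by
  induction ys with
  | nil => rfl
  | cons y ys ih =>
    have htail : (impl C (x :: xs) y (suffixLevenshtein C (x :: xs) ys)).1.tail =
        (suffixLevenshtein C xs (y :: ys)).1 := by
      rw [ih, impl_cons]
      rfl
    exact Subtype.ext (htail ▸ (List.getElem_zero_cons_tail _).symm)

@[simp]
theorem levenshtein_cons_nil (x : α) (xs : List α) :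
    levenshtein C (x :: xs) [] = C.delete x + levenshtein C xs [] :=
  rfl

@[simp]
theorem levenshtein_nil_cons (y : β) (ys : List β) :
    levenshtein C [] (y :: ys) = C.insert y + levenshtein C [] ys :=
  impl_nil C y _ (suffixLevenshtein_length C [] ys)

@[simp]
theorem levenshtein_cons_cons (x : α) (xs : List α) (y : β) (ys : List β) :
    levenshtein C (x :: xs) (y :: ys) =
      min (C.delete x + levenshtein C xs (y :: ys))
        (min (C.insert y + levenshtein C (x :: xs) ys)
          (C.substitute x y + levenshtein C xs ys)) := by
  change (impl C (x :: xs) y (suffixLevenshtein C (x :: xs) ys)).1[0]'(impl _ _ _ _).2 = _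
  simp only [suffixLevenshtein_cons_left, impl_cons, List.getElem_cons_zero]
  rfl

end LevenshteinRecursion

section Edit

variable [DecidableEq α]

theorem edit_cons_nil (x : α) (xs : List α) : edit (x :: xs) [] = edit xs [] + 1 :=
  (levenshtein_cons_nil _ x xs).trans (add_comm _ _)

theorem edit_nil_cons (y : α) (ys : List α) : edit [] (y :: ys) = edit [] ys + 1 :=
  (levenshtein_nil_cons _ y ys).trans (add_comm _ _)

theorem edit_cons_cons (x : α) (xs : List α) (y : α) (ys : List α) :
    edit (x :: xs) (y :: ys) =
      min (edit xs (y :: ys) + 1)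
        (min (edit (x :: xs) ys + 1) (edit xs ys + if x = y then 0 else 1)) := by
  simp only [edit, levenshtein_cons_cons, Levenshtein.defaultCost, add_comm]

theorem edit_nil_left (ys : List α) : edit [] ys = ys.length := by
  induction ys with
  | nil => rfl
  | cons y ys ih => rw [edit_nil_cons, ih, List.length_cons]

theorem edit_nil_right (xs : List α) : edit xs [] = xs.length := by
  induction xs with
  | nil => rfl
  | cons x xs ih => rw [edit_cons_nil, ih, List.length_cons]

theorem edit_cons_left_le (x : α) (xs ys : List α) : edit (x :: xs) ys ≤ edit xs ys + 1 := by
  cases ys with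
  | nil => simp [edit_nil_right]
  | cons y ys => rw [edit_cons_cons]; omega

theorem edit_cons_right_le (xs : List α) (y : α) (ys : List α) :
    edit xs (y :: ys) ≤ edit xs ys + 1 := by
  cases xs with
  | nil => rw [edit_nil_cons]
  | cons x xs => rw [edit_cons_cons]; omega

theorem edit_le_edit_cons_left (x : α) (xs ys : List α) :
    edit xs ys ≤ edit (x :: xs) ys + 1 := by
  induction ys with
  | nil => simp only [edit_nil_right, List.length_cons]; omega
  | cons y ys ih =>
    have := edit_cons_right_le xs y ys
    rw [edit_cons_cons]
    split_ifs <;> omega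

theorem edit_append_left_le (a xs ys : List α) : edit (a ++ xs) ys ≤ edit xs ys + a.length := by
  induction a with
  | nil => simp
  | cons x a ih =>
    have := edit_cons_left_le x (a ++ xs) ys
    simp only [List.cons_append, List.length_cons]
    omega

theorem edit_le_edit_append_left (a xs ys : List α) :
    edit xs ys ≤ edit (a ++ xs) ys + a.length := by
  induction a with
  | nil => simp
  | cons x a ih =>
    have := edit_le_edit_cons_left x (a ++ xs) ys
    simp only [List.cons_append, List.length_cons]
    omega

theorem length_le_edit_add_length : ∀ xs ys : List α, xs.length ≤ edit xs ys + ys.length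
  | [], _ => by simp
  | _ :: _, [] => by simp [edit_nil_right]
  | x :: xs, y :: ys => by
    have := length_le_edit_add_length xs (y :: ys)
    have := length_le_edit_add_length (x :: xs) ys
    have := length_le_edit_add_length xs ys
    rw [edit_cons_cons]
    simp only [List.length_cons] at *
    split_ifs <;> omega

theorem length_le_edit_add_length' (xs ys : List α) : ys.length ≤ edit xs ys + xs.length := by
  simpa [edit_nil_left] using edit_le_edit_append_left xs [] ys

theorem List.IsSuffix.edit_le {l₁ l₂ : List α} (h : l₁ <:+ l₂) (ys : List α) :
    edit l₂ ys ≤ edit l₁ ys + (l₂.length - l₁.length) := by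
  obtain ⟨a, rfl⟩ := h
  simpa using edit_append_left_le a l₁ ys

theorem List.IsSuffix.edit_le' {l₁ l₂ : List α} (h : l₁ <:+ l₂) (ys : List α) :
    edit l₁ ys ≤ edit l₂ ys + (l₂.length - l₁.length) := by
  obtain ⟨a, rfl⟩ := h
  simpa using edit_le_edit_append_left a l₁ ys

end Edit

theorem stmt_0_general [DecidableEq α] (S R : List α) (t k : ℕ)
    (ht2 : t ≤ S.length)
    (h : ∃ i, 1 ≤ i ∧ i ≤ t ∧ edit ((S.take t).drop (i - 1)) R ≤ k) :
    edit ((S.take t).drop (t - R.length)) R ≤ 2 * k := by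
  obtain ⟨i, -, -, hk⟩ := h
  set P := S.take t
  have hP : P.length = t := by simpa [P] using ht2
  have hlo := length_le_edit_add_length (P.drop (i - 1)) R
  have hhi := length_le_edit_add_length' (P.drop (i - 1)) R
  rcases le_total (i - 1) (t - R.length) with hle | hle
  · have := (P.drop_suffix_drop_left hle).edit_le' R
    simp only [List.length_drop, hP] at *
    omega
  · have := (P.drop_suffix_drop_left hle).edit_le R
    simp only [List.length_drop, hP] at *
    omega

/-- If some substring of S ending at position t is within edit distance k of R,
then the length-|R| substring of S ending at t (prefix S[1..t] when t < |R|)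
is within edit distance 2k of R. -/
theorem stmt_0 [DecidableEq α] (S R : List α) (t k : ℕ)
    (ht1 : 1 ≤ t) (ht2 : t ≤ S.length)
    (h : ∃ i, 1 ≤ i ∧ i ≤ t ∧ edit ((S.take t).drop (i - 1)) R ≤ k) :
    edit ((S.take t).drop (t - R.length)) R ≤ 2 * k :=
  stmt_0_general S R t k ht2 h
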